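/- Quadrilateral Fact: let S ⊆ ℝ² be a set, not contained in any affine line, that contains its circle centers, and suppose S contains an entire nondegenerate line segment (there exist points A ≠ B with {(1−t)A + tB : t ∈ [0,1]} ⊆ S). Then S contains an entire quadrilateral together with its interior: there exist four points of ℝ², not all on one line, whose convex hull has nonempty interior and is contained in S. -/

import Mathlib

/-!
Take `C ∈ S` off the line `AB`. If the circle about `O` through `C` cuts the open segment `AB` in
two points, `O` is a circle center of three points of `S`, so `O ∈ S`. With `F` the foot of the
perpendicular from `O` to `AB`, that circle meets the line `AB` at distance
`√(OC² - OF²)` on either side of `F`, so the condition is open in `O`; it holds at the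
circumcenter of `C` and two interior points of the segment. Hence `S` has nonempty interior and
contains a small parallelogram.
-/

open Real EuclideanGeometry

/-- A set in the Euclidean plane contains its circle centers if, whenever it contains
three non-collinear points, it contains the point equidistant from all three
(the circumcenter of the triangle they form). -/
def ContainsCircleCenters (S : Set (EuclideanSpace ℝ (Fin 2))) : Prop :=
  ∀ A ∈ S, ∀ B ∈ S, ∀ C ∈ S,
    ¬ Collinear ℝ ({A, B, C} : Set (EuclideanSpace ℝ (Fin 2))) →
    ∀ O : EuclideanSpace ℝ (Fin 2),
      dist O A = dist O B → dist O A = dist O C → O ∈ S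

open AffineMap
open scoped RealInnerProductSpace Topology

section Collinear

variable {k V P : Type*} [Field k] [AddCommGroup V] [Module k V] [AddTorsor V P]

theorem exists_not_collinear_of_not_collinear {S : Set P} {A B : P} (hS : ¬Collinear k S)
    (hAB : A ≠ B) : ∃ C ∈ S, ¬Collinear k ({A, B, C} : Set P) := by
  by_contra! h
  refine hS ((collinear_iff_exists_forall_eq_smul_vadd S).2 ⟨A, B -ᵥ A, fun p hp => ?_⟩)
  have hp' : (p -ᵥ A) +ᵥ A ∈ line[k, A, B] := by
    rw [vsub_vadd]; exact (h p hp).mem_affineSpan_of_mem_of_ne (by simp) (by simp) (by simp) hAB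
  obtain ⟨r, hr⟩ := vadd_left_mem_affineSpan_pair.1 hp'
  exact ⟨r, by rw [hr, vsub_vadd]⟩

theorem not_collinear_lineMap_lineMap {A B C : P} (hABC : ¬Collinear k ({A, B, C} : Set P))
    {p q : k} (hpq : p ≠ q) : ¬Collinear k ({lineMap A B p, lineMap A B q, C} : Set P) := by
  intro hcol
  have hAB : A ≠ B := ne₁₂_of_not_collinear hABC
  have hline : Collinear k ({lineMap A B p, lineMap A B q, A, B} : Set P) :=
    collinear_insert_insert_of_mem_affineSpan_pair (lineMap_mem_affineSpan_pair _ _ _)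
      (lineMap_mem_affineSpan_pair _ _ _)
  have hPQ : lineMap A B p ≠ lineMap A B q := (lineMap_injective k hAB).ne hpq
  have hCPQ : Collinear k ({C, lineMap A B p, lineMap A B q} : Set P) :=
    hcol.subset (by intro x; simp only [Set.mem_insert_iff, Set.mem_singleton_iff]; tauto)
  exact hABC (((hline.collinear_insert_iff_of_ne (by simp) (by simp) hPQ).2 hCPQ).subset
    (by intro x; simp only [Set.mem_insert_iff, Set.mem_singleton_iff]; tauto))

end Collinear

section SecantCenters

variable {E : Type*} [NormedAddCommGroup E] [InnerProductSpace ℝ E]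

/-- `lineMap A B (footParam A B O)` is the foot of the perpendicular from `O` to the line `AB`. -/
noncomputable def footParam (A B O : E) : ℝ := ⟪O - A, B - A⟫ / ‖B - A‖ ^ 2

theorem dist_lineMap_footParam_add_sq (A B O : E) (ρ : ℝ) :
    dist O (lineMap A B (footParam A B O + ρ)) ^ 2 =
      dist O (lineMap A B (footParam A B O)) ^ 2 + ρ ^ 2 * dist A B ^ 2 := by
  set s := footParam A B O with hs
  have horth : ⟪O - lineMap A B s, B - A⟫ = 0 := by
    rcases eq_or_ne B A with rfl | hBA
    · simp
    · rw [lineMap_apply_module', sub_add_eq_sub_sub_swap, inner_sub_left, real_inner_smul_left,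
        hs, footParam, real_inner_self_eq_norm_sq,
        div_mul_cancel₀ _ (by simpa [sub_eq_zero] using hBA), sub_self]
  rw [dist_eq_norm, dist_eq_norm, dist_eq_norm',
    show O - lineMap A B (s + ρ) = (O - lineMap A B s) - ρ • (B - A) by
      simp only [lineMap_apply_module']; module,
    norm_sub_sq_real, real_inner_smul_right, horth, norm_smul, Real.norm_eq_abs, mul_pow, sq_abs]
  ring

/-- The circle about `O` through `C` meets the line `AB` at the parameters
`footParam A B O ± √(halfChordSq A B C O)`. -/
noncomputable def halfChordSq (A B C O : E) : ℝ :=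
  (dist O C ^ 2 - dist O (lineMap A B (footParam A B O)) ^ 2) / dist A B ^ 2

/-- Centers of the circles through `C` that cut the open segment `AB` in two points. -/
def secantCenters (A B C : E) : Set E :=
  {O | 0 < halfChordSq A B C O ∧ √(halfChordSq A B C O) < footParam A B O ∧
    √(halfChordSq A B C O) < 1 - footParam A B O}

theorem continuous_footParam (A B : E) : Continuous (footParam A B) := by
  unfold footParam; fun_prop

theorem continuous_halfChordSq (A B C : E) : Continuous (halfChordSq A B C) := by
  have := continuous_footParam A B
  unfold halfChordSq; fun_prop

theorem isOpen_secantCenters (A B C : E) : IsOpen (secantCenters A B C) := by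
  have hs := continuous_footParam A B
  have hh := continuous_halfChordSq A B C
  exact (isOpen_lt continuous_const hh).inter ((isOpen_lt hh.sqrt hs).inter
    (isOpen_lt hh.sqrt (continuous_const.sub hs)))

variable {A B C O : E}

theorem exists_dist_eq_of_mem_secantCenters (hAB : A ≠ B) (hO : O ∈ secantCenters A B C) :
    ∃ p ∈ Set.Icc (0 : ℝ) 1, ∃ q ∈ Set.Icc (0 : ℝ) 1, p ≠ q ∧
      dist O (lineMap A B p) = dist O C ∧ dist O (lineMap A B q) = dist O C := by
  obtain ⟨hpos, hlo, hhi⟩ := hO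
  set s := footParam A B O
  set ρ := √(halfChordSq A B C O)
  have hρ : 0 < ρ := Real.sqrt_pos.2 hpos
  have hdist : ∀ σ : ℝ, σ ^ 2 = halfChordSq A B C O → dist O (lineMap A B (s + σ)) = dist O C := by
    intro σ hσ
    refine (sq_eq_sq₀ dist_nonneg dist_nonneg).1 ?_
    rw [dist_lineMap_footParam_add_sq, hσ, halfChordSq, div_mul_cancel₀ _ (by simpa using hAB)]
    ring
  refine ⟨s + -ρ, ⟨by linarith, by linarith⟩, s + ρ, ⟨by linarith, by linarith⟩, by linarith,
    hdist _ ?_, hdist _ ?_⟩ <;> simp [ρ, Real.sq_sqrt hpos.le]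

theorem mem_secantCenters_of_dist_eq {p q : ℝ} (hp : 0 < p) (hpq : p < q) (hq : q < 1)
    (hAB : A ≠ B) (hOp : dist O (lineMap A B p) = dist O C)
    (hOq : dist O (lineMap A B q) = dist O C) : O ∈ secantCenters A B C := by
  have hL : 0 < dist A B ^ 2 := pow_pos (dist_pos.2 hAB) 2
  have hsq : ∀ r : ℝ, dist O (lineMap A B r) ^ 2 = dist O (lineMap A B (footParam A B O)) ^ 2 +
      (r - footParam A B O) ^ 2 * dist A B ^ 2 := fun r => by
    rw [← dist_lineMap_footParam_add_sq, add_sub_cancel]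
  have hmid : footParam A B O = (p + q) / 2 := by
    have h := (hsq p).symm.trans ((congrArg (· ^ 2) (hOp.trans hOq.symm)).trans (hsq q))
    have h' := mul_right_cancel₀ hL.ne' (add_left_cancel h)
    have : (p - q) * (p + q - 2 * footParam A B O) = 0 := by linear_combination h'
    linarith [(mul_eq_zero.1 this).resolve_left (sub_ne_zero.2 hpq.ne)]
  have hh : halfChordSq A B C O = ((q - p) / 2) ^ 2 := by
    rw [halfChordSq, ← hOp, hsq p, add_sub_cancel_left, mul_div_assoc, div_self hL.ne', mul_one,
      hmid]
    ring
  have hρ : √(halfChordSq A B C O) = (q - p) / 2 := by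
    rw [hh, Real.sqrt_sq (by linarith)]
  refine ⟨by rw [hh]; positivity, ?_, ?_⟩ <;> rw [hρ, hmid] <;> linarith

theorem secantCenters_nonempty (hABC : ¬Collinear ℝ ({A, B, C} : Set E)) :
    (secantCenters A B C).Nonempty := by
  let T : Affine.Triangle ℝ E := ⟨![lineMap A B (1 / 4 : ℝ), lineMap A B (3 / 4 : ℝ), C],
    affineIndependent_iff_not_collinear_set.2 (not_collinear_lineMap_lineMap hABC (by norm_num))⟩
  have hT : ∀ i, dist T.circumcenter (T.points i) = T.circumradius :=
    T.dist_circumcenter_eq_circumradius'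
  exact ⟨T.circumcenter, mem_secantCenters_of_dist_eq (p := 1 / 4) (q := 3 / 4) (by norm_num)
    (by norm_num) (by norm_num) (ne₁₂_of_not_collinear hABC) ((hT 0).trans (hT 2).symm)
    ((hT 1).trans (hT 2).symm)⟩

end SecantCenters

section Quadrilateral

variable {F : Type*} [NormedAddCommGroup F] [NormedSpace ℝ F]

theorem not_collinear_of_affineSpan_eq_top (hF : Module.finrank ℝ F = 2) {s : Set F}
    (hs : affineSpan ℝ s = ⊤) : ¬Collinear ℝ s := by
  have := Module.finite_of_finrank_eq_succ hF
  rw [collinear_iff_finrank_le_one, ← direction_affineSpan, hs, AffineSubspace.direction_top,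
    finrank_top, hF]
  norm_num

theorem affineSpan_parallelogram_eq_top {x u w : F} (huw : Submodule.span ℝ {u, w} = ⊤) :
    affineSpan ℝ ({x, x + u, x + w, x + u + w} : Set F) = ⊤ := by
  rw [AffineSubspace.affineSpan_eq_top_iff_vectorSpan_eq_top_of_nonempty ℝ _ _ (by simp),
    eq_top_iff, ← huw, Submodule.span_le, Set.pair_subset_iff]
  constructor
  · simpa using vsub_mem_vectorSpan ℝ (by simp : x + u ∈ ({x, x + u, x + w, x + u + w} : Set F))
      (by simp : x ∈ ({x, x + u, x + w, x + u + w} : Set F))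
  · simpa using vsub_mem_vectorSpan ℝ (by simp : x + w ∈ ({x, x + u, x + w, x + u + w} : Set F))
      (by simp : x ∈ ({x, x + u, x + w, x + u + w} : Set F))

theorem exists_quadrilateral_subset_of_mem_nhds (hF : Module.finrank ℝ F = 2) {U : Set F} {x : F}
    (hU : U ∈ 𝓝 x) :
    ∃ p₁ p₂ p₃ p₄ : F, ¬Collinear ℝ ({p₁, p₂, p₃, p₄} : Set F) ∧
      (interior (convexHull ℝ ({p₁, p₂, p₃, p₄} : Set F))).Nonempty ∧
      convexHull ℝ ({p₁, p₂, p₃, p₄} : Set F) ⊆ U := by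
  have := Module.finite_of_finrank_eq_succ hF
  obtain ⟨r, hr, hball⟩ := Metric.mem_nhds_iff.1 hU
  let b := Module.finBasisOfFinrankEq ℝ F hF
  set ε := r / (‖b 0‖ + ‖b 1‖ + 1)
  have hε : 0 < ε := by positivity
  have hsmall : ‖ε • b 0‖ + ‖ε • b 1‖ < r := by
    rw [norm_smul, norm_smul, Real.norm_of_nonneg hε.le, ← mul_add]
    calc ε * (‖b 0‖ + ‖b 1‖) < ε * (‖b 0‖ + ‖b 1‖ + 1) := mul_lt_mul_of_pos_left (by linarith) hε
      _ = r := div_mul_cancel₀ _ (by positivity)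
  have hspan : Submodule.span ℝ {ε • b 0, ε • b 1} = ⊤ := by
    rw [eq_top_iff, ← b.span_eq, Submodule.span_le]
    rintro _ ⟨i, rfl⟩
    rw [← inv_smul_smul₀ hε.ne' (b i)]
    refine Submodule.smul_mem _ _ (Submodule.subset_span ?_)
    fin_cases i <;> simp
  have htop := affineSpan_parallelogram_eq_top (x := x) hspan
  refine ⟨_, _, _, _, not_collinear_of_affineSpan_eq_top hF htop, ?_, ?_⟩
  · rw [(convex_convexHull ℝ _).interior_nonempty_iff_affineSpan_eq_top, affineSpan_convexHull]
    exact htop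
  · refine ((convex_ball x r).convexHull_subset_iff.2 ?_).trans hball
    have h₀ := norm_nonneg (ε • b 0)
    have h₁ := norm_nonneg (ε • b 1)
    have h₀₁ := norm_add_le (ε • b 0) (ε • b 1)
    simp only [Set.insert_subset_iff, Set.singleton_subset_iff, Metric.mem_ball, dist_eq_norm,
      sub_self, add_sub_cancel_left, add_assoc, norm_zero]
    refine ⟨hr, ?_, ?_, ?_⟩ <;> linarith

end Quadrilateral

theorem ContainsCircleCenters.secantCenters_subset {S : Set (EuclideanSpace ℝ (Fin 2))}
    (hcc : ContainsCircleCenters S) {A B C : EuclideanSpace ℝ (Fin 2)}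
    (hseg : segment ℝ A B ⊆ S) (hC : C ∈ S) (hABC : ¬Collinear ℝ ({A, B, C} : Set _)) :
    secantCenters A B C ⊆ S := by
  intro O hO
  obtain ⟨p, hp, q, hq, hpq, hOp, hOq⟩ :=
    exists_dist_eq_of_mem_secantCenters (ne₁₂_of_not_collinear hABC) hO
  have hlineMap : ∀ r ∈ Set.Icc (0 : ℝ) 1, lineMap A B r ∈ S := fun r hr =>
    hseg (segment_eq_image_lineMap ℝ A B ▸ Set.mem_image_of_mem _ hr)
  exact hcc _ (hlineMap p hp) _ (hlineMap q hq) C hC (not_collinear_lineMap_lineMap hABC hpq) O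
    (hOp.trans hOq.symm) hOp

theorem quadrilateral_fact (S : Set (EuclideanSpace ℝ (Fin 2)))
    (hline : ¬ Collinear ℝ S) (hcc : ContainsCircleCenters S)
    (A B : EuclideanSpace ℝ (Fin 2)) (hAB : A ≠ B) (hseg : segment ℝ A B ⊆ S) :
    ∃ p₁ p₂ p₃ p₄ : EuclideanSpace ℝ (Fin 2),
      ¬ Collinear ℝ ({p₁, p₂, p₃, p₄} : Set (EuclideanSpace ℝ (Fin 2))) ∧
      (interior (convexHull ℝ ({p₁, p₂, p₃, p₄} : Set (EuclideanSpace ℝ (Fin 2))))).Nonempty ∧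
      convexHull ℝ ({p₁, p₂, p₃, p₄} : Set (EuclideanSpace ℝ (Fin 2))) ⊆ S := by
  obtain ⟨C, hC, hABC⟩ := exists_not_collinear_of_not_collinear hline hAB
  obtain ⟨O, hO⟩ := secantCenters_nonempty hABC
  exact exists_quadrilateral_subset_of_mem_nhds finrank_euclideanSpace_fin
    (Filter.mem_of_superset ((isOpen_secantCenters A B C).mem_nhds hO)
      (hcc.secantCenters_subset hseg hC hABC))
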